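/- For all integers p, q ≥ −1 and all paths u ∈ Λ_p(V,K), v ∈ Λ_q(V,K), the boundary operator satisfies the product rule ∂(uv) = (∂u)v + (−1)^{p+1} u(∂v) in Λ_{p+q}(V,K) (where a join with an element of Λ_{−2} = {0} is 0). -/

import Mathlib

/-!
Inserting a vertex `k` at position `q` of `y` and cutting the result into a left and a right
part puts `k` into the right part when the cut `i` is at most `q`, where it sits at position
`q - i`, and into the left part otherwise. Summed with the signs `(-1)^q`, the second kind of
terms is `((∂u)v)(y)` after exchanging the sums over `q` and the cut, and the first kind is
`Σ_i (-1)^i u(y₀…y_{i-1}) (∂v)(y_i…)` because `(-1)^q = (-1)^i (-1)^(q-i)`.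
For `u ∈ Λ_{m-1}` only the cut `i = m` survives.
-/

noncomputable section

namespace Stmt0

variable (K : Type) [Field K] (V : Type) [Fintype V] [DecidableEq V]

/-- We represent the graded space `⊕_{p ≥ -1} Λ_p(V,K)` as functions on lists of
vertices: a list with `m` vertices represents an elementary `(m-1)`-path, the
empty list being the empty `(-1)`-path `e`, so that `Λ_p` is the subspace `Grade (p+1)`
of functions supported on lists of length `p+1`. The join `uv` of `u ∈ Λ_p` and
`v ∈ Λ_q` (extending `e_x e_y = e_{xy}` bilinearly) is given on such graded
components by the convolution below. -/
def pjoin (u v : List V → K) : List V → K :=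
  fun z => ∑ i ∈ Finset.range (z.length + 1), u (z.take i) * v (z.drop i)

/-- The boundary operator `∂`, the linear extension of
`∂ e_{i₀…i_p} = Σ_q (-1)^q e_{i₀…î_q…i_p}` (in coordinates,
`(∂v)^y = Σ_{q,k} (-1)^q v^{y with k inserted at position q}`); it maps
`Λ_p = Grade (p+1)` to `Λ_{p-1} = Grade p`, and vanishes on `Λ_{-1} = Grade 0`
(that is, `∂` maps `Λ_{-1}` to `Λ_{-2} = {0}`). -/
def pbdry (v : List V → K) : List V → K :=
  fun y => ∑ q ∈ Finset.range (y.length + 1), ∑ k : V, ((-1 : K) ^ q) * v (y.insertIdx q k)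

/-- `Grade m` is (the isomorphic copy of) `Λ_{m-1}(V,K)`: functions supported on
elementary paths with exactly `m` vertices. -/
def Grade (m : ℕ) : Set (List V → K) := {v | ∀ z : List V, z.length ≠ m → v z = 0}

theorem _root_.List.drop_insertIdx_of_le {α : Type*} (l : List α) (a : α) {i q : ℕ}
    (hiq : i ≤ q) (hq : q ≤ l.length) :
    (l.insertIdx q a).drop i = (l.drop i).insertIdx (q - i) a :=
  List.ext_getElem (by grind) (by grind)

theorem _root_.List.take_succ_insertIdx_of_le {α : Type*} (l : List α) (a : α) {i q : ℕ}
    (hqi : q ≤ i) : (l.insertIdx q a).take (i + 1) = (l.take i).insertIdx q a :=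
  List.ext_getElem (by grind) (by grind)

theorem _root_.List.drop_succ_insertIdx_of_le {α : Type*} (l : List α) (a : α) {i q : ℕ}
    (hqi : q ≤ i) : (l.insertIdx q a).drop (i + 1) = l.drop i :=
  List.ext_getElem (by grind) (by grind)

open Finset

theorem _root_.Finset.sum_range_sum_range_succ_eq_sum_range_sum_range {M : Type*}
    [AddCommMonoid M] (N : ℕ) (f : ℕ → ℕ → M) :
    ∑ q ∈ range N, ∑ i ∈ range (q + 1), f i q
      = ∑ i ∈ range N, ∑ r ∈ range (N - i), f i (i + r) := by
  calc ∑ q ∈ range N, ∑ i ∈ range (q + 1), f i q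
      = ∑ i ∈ range N, ∑ q ∈ Ico i N, f i q := by
        simpa only [range_eq_Ico] using (sum_Ico_Ico_comm 0 N f).symm
    _ = _ := sum_congr rfl fun i _ => sum_Ico_eq_sum_range _ _ _

section

variable {K V}

omit [DecidableEq V]

omit [Fintype V] in
theorem pjoin_insertIdx (u v : List V → K) (y : List V) (k : V) {q : ℕ} (hq : q ≤ y.length) :
    pjoin K V u v (y.insertIdx q k)
      = ∑ i ∈ range (q + 1), u (y.take i) * v ((y.drop i).insertIdx (q - i) k)
        + ∑ i ∈ Ico q (y.length + 1), u ((y.take i).insertIdx q k) * v (y.drop i) := by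
  rw [pjoin, List.length_insertIdx_of_le_length hq,
    ← sum_range_add_sum_Ico _ (by omega : q + 1 ≤ y.length + 1 + 1), ← sum_Ico_add']
  congr 1
  · refine sum_congr rfl fun i hi => ?_
    have hiq : i ≤ q := mem_range_succ_iff.mp hi
    rw [List.take_insertIdx_eq_take_of_le _ _ _ _ hiq, List.drop_insertIdx_of_le _ _ hiq hq]
  · refine sum_congr rfl fun i hi => ?_
    have hqi : q ≤ i := (mem_Ico.mp hi).1
    rw [List.take_succ_insertIdx_of_le _ _ hqi, List.drop_succ_insertIdx_of_le _ _ hqi]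

omit [Fintype V] in
theorem sum_neg_one_pow_mul_pjoin_apply_of_mem_grade {m : ℕ} {u : List V → K}
    (hu : u ∈ Grade K V m) (w : List V → K) (y : List V) :
    ∑ i ∈ range (y.length + 1), (-1 : K) ^ i * (u (y.take i) * w (y.drop i))
      = (-1 : K) ^ m * pjoin K V u w y := by
  rw [pjoin, mul_sum]
  refine sum_congr rfl fun i hi => ?_
  rcases eq_or_ne i m with rfl | him
  · rfl
  · have hlen : (y.take i).length ≠ m :=
      (List.length_take_of_le (mem_range_succ_iff.mp hi)).trans_ne him
    simp only [hu _ hlen, zero_mul, mul_zero]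

theorem pjoin_pbdry_left_apply (u v : List V → K) (y : List V) :
    pjoin K V (pbdry K V u) v y
      = ∑ q ∈ range (y.length + 1), ∑ k : V, (-1 : K) ^ q *
          ∑ i ∈ Ico q (y.length + 1), u ((y.take i).insertIdx q k) * v (y.drop i) := by
  calc pjoin K V (pbdry K V u) v y
      = ∑ i ∈ range (y.length + 1), ∑ q ∈ range (i + 1), ∑ k : V,
          (-1 : K) ^ q * (u ((y.take i).insertIdx q k) * v (y.drop i)) := by
        refine sum_congr rfl fun i hi => ?_
        rw [pbdry, List.length_take_of_le (mem_range_succ_iff.mp hi)]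
        simp only [sum_mul, mul_assoc]
    _ = ∑ q ∈ range (y.length + 1), ∑ i ∈ Ico q (y.length + 1), ∑ k : V,
          (-1 : K) ^ q * (u ((y.take i).insertIdx q k) * v (y.drop i)) := by
        simpa only [range_eq_Ico] using (sum_Ico_Ico_comm 0 (y.length + 1) _).symm
    _ = _ := sum_congr rfl fun q _ => by simp only [mul_sum]; exact sum_comm

theorem sum_neg_one_pow_mul_pbdry_right_apply (u v : List V → K) (y : List V) :
    ∑ i ∈ range (y.length + 1), (-1 : K) ^ i * (u (y.take i) * pbdry K V v (y.drop i))
      = ∑ q ∈ range (y.length + 1), ∑ k : V, (-1 : K) ^ q *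
          ∑ i ∈ range (q + 1), u (y.take i) * v ((y.drop i).insertIdx (q - i) k) := by
  symm
  calc ∑ q ∈ range (y.length + 1), ∑ k : V, (-1 : K) ^ q *
          ∑ i ∈ range (q + 1), u (y.take i) * v ((y.drop i).insertIdx (q - i) k)
      = ∑ q ∈ range (y.length + 1), ∑ i ∈ range (q + 1), ∑ k : V,
          (-1 : K) ^ q * (u (y.take i) * v ((y.drop i).insertIdx (q - i) k)) :=
        sum_congr rfl fun q _ => by simp only [mul_sum]; exact sum_comm
    _ = ∑ i ∈ range (y.length + 1), ∑ r ∈ range (y.length + 1 - i), ∑ k : V,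
          (-1 : K) ^ (i + r) * (u (y.take i) * v ((y.drop i).insertIdx (i + r - i) k)) :=
        sum_range_sum_range_succ_eq_sum_range_sum_range _ _
    _ = _ := by
        refine sum_congr rfl fun i hi => ?_
        rw [pbdry, List.length_drop, Nat.sub_add_comm (mem_range_succ_iff.mp hi)]
        simp only [Nat.add_sub_cancel_left, pow_add, mul_sum]
        exact sum_congr rfl fun r _ => sum_congr rfl fun k _ => by ring

theorem pbdry_pjoin_apply (u v : List V → K) (y : List V) :
    pbdry K V (pjoin K V u v) y
      = pjoin K V (pbdry K V u) v y
        + ∑ i ∈ range (y.length + 1),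
            (-1 : K) ^ i * (u (y.take i) * pbdry K V v (y.drop i)) := by
  rw [pjoin_pbdry_left_apply, sum_neg_one_pow_mul_pbdry_right_apply, add_comm, ← sum_add_distrib]
  refine sum_congr rfl fun q hq => ?_
  rw [← sum_add_distrib]
  refine sum_congr rfl fun k _ => ?_
  rw [pjoin_insertIdx u v y k (mem_range_succ_iff.mp hq), mul_add]

end

theorem boundary_join_product_rule (m : ℕ) (u v : List V → K)
    (hu : u ∈ Grade K V m) :
    pbdry K V (pjoin K V u v)
      = pjoin K V (pbdry K V u) v + ((-1 : K) ^ m) • pjoin K V u (pbdry K V v) := by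
  funext y
  rw [Pi.add_apply, Pi.smul_apply, smul_eq_mul, pbdry_pjoin_apply,
    sum_neg_one_pow_mul_pjoin_apply_of_mem_grade hu]

end Stmt0
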